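/- arXiv:2502.20991 — 2 statements merged into one kernel-verified Lean document; each statement's English description precedes it below -/
import Mathlib

section
/- For an information frame 𝔸, every set of the form [X]_i = {a ∈ A : X ⊢_i a}, with i ∈ A and X ∈ Con_i, is a global state of 𝔸. -/
/-- The data `(Con, Ent)` on token set `A` forms an information frame.
`Con i` is the set of finite sets of tokens consistent with `i`, and
`Ent i X a` means `X ⊢ᵢ a`.  The accessibility relation is `i R j ↔ {i} ∈ Con j`. -/
structure IsInfoFrame {A : Type*} [DecidableEq A]
    (Con : A → Set (Finset A)) (Ent : A → Finset A → A → Prop) : Prop where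
  self_con : ∀ i : A, ({i} : Finset A) ∈ Con i
  con_down : ∀ (i : A) (X Y : Finset A), Y ⊆ X → X ∈ Con i → Y ∈ Con i
  sound : ∀ (i : A) (X Y : Finset A), X ∈ Con i → (∀ b ∈ Y, Ent i X b) → Y ∈ Con i
  weaken : ∀ (i : A) (X Y : Finset A) (a : A),
    X ∈ Con i → Y ∈ Con i → X ⊆ Y → Ent i X a → Ent i Y a
  cut : ∀ (i : A) (X Y : Finset A) (a : A),
    X ∈ Con i → (∀ b ∈ Y, Ent i X b) → Ent i Y a → Ent i X a
  con_transfer : ∀ i j : A, ({i} : Finset A) ∈ Con j → Con i ⊆ Con j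
  ent_transfer : ∀ (i j : A) (X : Finset A) (a : A),
    ({i} : Finset A) ∈ Con j → X ∈ Con i → Ent i X a → Ent j X a
  interp : ∀ (i : A) (X Y : Finset A), X ∈ Con i → (∀ b ∈ Y, Ent i X b) →
    ∃ (e : A) (Z : Finset A), Z ∈ Con e ∧ (∀ b ∈ insert e Z, Ent i X b) ∧
      (∀ b ∈ Y, Ent e Z b)

/-- Finite consistency of a subset `x` of tokens. -/
def FinConsistent {A : Type*} (Con : A → Set (Finset A)) (x : Set A) : Prop :=
  ∀ F : Finset A, ↑F ⊆ x → ∃ i ∈ x, F ∈ Con i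

/-- Closure of `x` under entailment. -/
def EntClosed {A : Type*} (Con : A → Set (Finset A))
    (Ent : A → Finset A → A → Prop) (x : Set A) : Prop :=
  ∀ i ∈ x, ∀ X : Finset A, ↑X ⊆ x → X ∈ Con i → ∀ a : A, Ent i X a → a ∈ x

/-- Completeness of `x`. -/
def EntComplete {A : Type*} (Con : A → Set (Finset A))
    (Ent : A → Finset A → A → Prop) (x : Set A) : Prop :=
  ∀ a ∈ x, ∃ i ∈ x, ∃ X : Finset A, ↑X ⊆ x ∧ X ∈ Con i ∧ Ent i X a

/-- A (global) state of an information frame. -/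
def IsState {A : Type*} (Con : A → Set (Finset A))
    (Ent : A → Finset A → A → Prop) (x : Set A) : Prop :=
  FinConsistent Con x ∧ EntClosed Con Ent x ∧ EntComplete Con Ent x

/-!
Interpolation applied to a finite part `F` of `[X]ᵢ` yields a token `e` and a set `Z ∈ Con e`,
all entailed by `X` at `i`, with `Z ⊢ₑ F`; soundness at `e` makes `F` consistent with `e`, and the
case `F = {a}` is completeness. For closure, a token `j` with `X ⊢ᵢ j` satisfies `{j} ∈ Con i` by
soundness, so entailments at `j` transfer to `i` and then cut back to `X`.
-/

namespace IsInfoFrame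

variable {A : Type*} [DecidableEq A] {Con : A → Set (Finset A)} {Ent : A → Finset A → A → Prop}
  {i : A} {X : Finset A}

theorem singleton_mem_con_of_ent (hF : IsInfoFrame Con Ent) (hX : X ∈ Con i) {j : A}
    (hj : Ent i X j) : ({j} : Finset A) ∈ Con i :=
  hF.sound i X {j} hX (by simpa using hj)

theorem ent_of_ent_of_ent (hF : IsInfoFrame Con Ent) (hX : X ∈ Con i) {j a : A}
    (hj : Ent i X j) {Y : Finset A} (hY : ∀ b ∈ Y, Ent i X b) (hYj : Y ∈ Con j)
    (ha : Ent j Y a) : Ent i X a :=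
  hF.cut i X Y a hX hY (hF.ent_transfer j i Y a (hF.singleton_mem_con_of_ent hX hj) hYj ha)

theorem finConsistent_setOf_ent (hF : IsInfoFrame Con Ent) (hX : X ∈ Con i) :
    FinConsistent Con {a : A | Ent i X a} := by
  intro F hFX
  obtain ⟨e, Z, hZ, hXeZ, hZF⟩ := hF.interp i X F hX fun b hb => hFX hb
  exact ⟨e, hXeZ e (Finset.mem_insert_self e Z), hF.sound e Z F hZ hZF⟩

theorem entClosed_setOf_ent (hF : IsInfoFrame Con Ent) (hX : X ∈ Con i) :
    EntClosed Con Ent {a : A | Ent i X a} :=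
  fun _ hj _ hY hYj _ ha => hF.ent_of_ent_of_ent hX hj (fun _ hb => hY hb) hYj ha

theorem entComplete_setOf_ent (hF : IsInfoFrame Con Ent) (hX : X ∈ Con i) :
    EntComplete Con Ent {a : A | Ent i X a} := by
  intro a ha
  obtain ⟨e, Z, hZ, hXeZ, hZa⟩ := hF.interp i X {a} hX (by simpa using ha)
  exact ⟨e, hXeZ e (Finset.mem_insert_self e Z), Z,
    fun b hb => hXeZ b (Finset.mem_insert_of_mem hb), hZ, hZa a (Finset.mem_singleton_self a)⟩

end IsInfoFrame

theorem stmt11 {A : Type*} [DecidableEq A] (Con : A → Set (Finset A))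
    (Ent : A → Finset A → A → Prop) (hF : IsInfoFrame Con Ent)
    (i : A) (X : Finset A) (hX : X ∈ Con i) :
    IsState Con Ent {a : A | Ent i X a} :=
  ⟨hF.finConsistent_setOf_ent hX, hF.entClosed_setOf_ent hX, hF.entComplete_setOf_ent hX⟩
end

section
/- For a domain 𝔻 with basis B and any x ∈ D, the set st(x) = {a ∈ B : a ≪ x} is a global state of the information frame F(𝔻); moreover ⨆ st(x) = x. -/
/-- `x` is way below (approximates) `y`. -/
def WayBelow {D : Type*} [PartialOrder D] (x y : D) : Prop :=
  ∀ S : Set D, S.Nonempty → DirectedOn (· ≤ ·) S → ∀ s : D, IsLUB S s → y ≤ s →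
    ∃ u ∈ S, x ≤ u

/-- `D` is directed complete. -/
def IsDcpo (D : Type*) [PartialOrder D] : Prop :=
  ∀ S : Set D, S.Nonempty → DirectedOn (· ≤ ·) S → ∃ s : D, IsLUB S s

/-- `B` is a basis of the dcpo `D`: every element is the least upper bound of a
directed set of basis elements way below it. -/
def IsBasis {D : Type*} [PartialOrder D] (B : Set D) : Prop :=
  ∀ x : D, ∃ S : Set D, S ⊆ B ∧ (∀ b ∈ S, WayBelow b x) ∧ S.Nonempty ∧
    DirectedOn (· ≤ ·) S ∧ IsLUB S x

/-- The consistency predicates of the information frame `F(𝔻)` on the basis `B`. -/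
def domCon {D : Type*} [PartialOrder D] (B : Set D) : ↥B → Set (Finset ↥B) :=
  fun i => {({i} : Finset ↥B)} ∪ {X : Finset ↥B | ∀ b ∈ X, WayBelow (b : D) (i : D)}

/-- The entailment relations of the information frame `F(𝔻)`:
`X ⊨ᵢ a` iff `a ≪ b` for some `b ∈ X ∪ {i}`. -/
def domEnt {D : Type*} [PartialOrder D] [DecidableEq D] (B : Set D) :
    ↥B → Finset ↥B → ↥B → Prop :=
  fun i X a => ∃ b ∈ insert i X, WayBelow (a : D) (b : D)

lemma wb_le {D : Type*} [PartialOrder D] {a b : D} (h : WayBelow a b) : a ≤ b := by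
  obtain ⟨u, hu, hau⟩ := h {b} ⟨b, rfl⟩ (directedOn_singleton b) b
    isLUB_singleton le_rfl
  simpa [Set.mem_singleton_iff.mp hu] using hau

lemma wb_mono {D : Type*} [PartialOrder D] {a' a b b' : D} (ha : a' ≤ a) (h : WayBelow a b)
    (hb : b ≤ b') : WayBelow a' b' := by
  intro S hS hdir s hs hbs
  obtain ⟨u, hu, hau⟩ := h S hS hdir s hs (le_trans hb hbs)
  exact ⟨u, hu, le_trans ha hau⟩

lemma directedOn_finset_le {D : Type*} [PartialOrder D] {S : Set D} (hne : S.Nonempty)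
    (hdir : DirectedOn (· ≤ ·) S) (F : Finset D) (hF : ↑F ⊆ S) :
    ∃ z ∈ S, ∀ y ∈ F, y ≤ z := by
  classical
  induction F using Finset.induction with
  | empty => exact ⟨hne.choose, hne.choose_spec, by simp⟩
  | @insert a s hnotmem ih =>
    obtain ⟨z, hz, hzle⟩ := ih (fun y hy => hF (by simp [hy]))
    have ha : a ∈ S := hF (by simp)
    obtain ⟨w, hw, haw, hzw⟩ := hdir a ha z hz
    exact ⟨w, hw, fun y hy => by
      rcases Finset.mem_insert.mp hy with rfl | hy
      · exact haw
      · exact le_trans (hzle y hy) hzw⟩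

/-- Key interpolation lemma: any finite set of approximants of `x` is interpolated
by a single basis element way below `x`. -/
lemma interp_finset {D : Type*} [PartialOrder D] {B : Set D} (hbasis : IsBasis B) (x : D)
    (F : Finset D) (hF : ∀ b ∈ F, WayBelow b x) :
    ∃ d ∈ B, WayBelow d x ∧ ∀ b ∈ F, WayBelow b d := by
  classical
  obtain ⟨S, hSB, hSwb, hSne, hSdir, hSlub⟩ := hbasis x
  -- for each d, pick an approximating set
  let T : D → Set D := fun d => (hbasis d).choose
  have hT : ∀ d : D, T d ⊆ B ∧ (∀ b ∈ T d, WayBelow b d) ∧ (T d).Nonempty ∧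
      DirectedOn (· ≤ ·) (T d) ∧ IsLUB (T d) d := fun d => (hbasis d).choose_spec
  set M : Set D := ⋃ d ∈ S, T d with hM
  have hMmem : ∀ c ∈ M, ∃ d ∈ S, c ∈ T d := by
    intro c hc; simpa [hM] using hc
  have hMne : M.Nonempty := by
    obtain ⟨d, hd⟩ := hSne
    obtain ⟨c, hc⟩ := (hT d).2.2.1
    exact ⟨c, Set.mem_biUnion hd hc⟩
  have hMdir : DirectedOn (· ≤ ·) M := by
    intro c1 hc1 c2 hc2
    obtain ⟨d1, hd1, hc1'⟩ := hMmem c1 hc1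
    obtain ⟨d2, hd2, hc2'⟩ := hMmem c2 hc2
    obtain ⟨d, hd, hd1d, hd2d⟩ := hSdir d1 hd1 d2 hd2
    obtain ⟨Td_B, Td_wb, Td_ne, Td_dir, Td_lub⟩ := hT d
    have h1 : WayBelow c1 d := wb_mono le_rfl ((hT d1).2.1 c1 hc1') hd1d
    have h2 : WayBelow c2 d := wb_mono le_rfl ((hT d2).2.1 c2 hc2') hd2d
    obtain ⟨e1, he1, hce1⟩ := h1 (T d) Td_ne Td_dir d Td_lub le_rfl
    obtain ⟨e2, he2, hce2⟩ := h2 (T d) Td_ne Td_dir d Td_lub le_rfl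
    obtain ⟨e, he, h1e, h2e⟩ := Td_dir e1 he1 e2 he2
    exact ⟨e, Set.mem_biUnion hd he, le_trans hce1 h1e, le_trans hce2 h2e⟩
  have hMlub : IsLUB M x := by
    constructor
    · intro c hc
      obtain ⟨d, hd, hc'⟩ := hMmem c hc
      exact le_trans (wb_le ((hT d).2.1 c hc')) (le_trans (wb_le (hSwb d hd)) le_rfl)
    · intro u hu
      apply hSlub.2
      intro d hd
      apply (hT d).2.2.2.2.2
      intro c hc
      exact hu (Set.mem_biUnion hd hc)
  -- each b ∈ F gets an element of M above it
  have key : ∀ b ∈ F, ∃ d ∈ S, WayBelow b d := by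
    intro b hb
    obtain ⟨c, hc, hbc⟩ := hF b hb M hMne hMdir x hMlub le_rfl
    obtain ⟨d, hd, hc'⟩ := hMmem c hc
    exact ⟨d, hd, wb_mono hbc ((hT d).2.1 c hc') le_rfl⟩
  let g : D → D := fun b => if h : ∃ d ∈ S, WayBelow b d then h.choose else hSne.choose
  have hg : ∀ b ∈ F, g b ∈ S ∧ WayBelow b (g b) := by
    intro b hb
    have h := key b hb
    simp only [g, dif_pos h]
    exact ⟨h.choose_spec.1, h.choose_spec.2⟩
  obtain ⟨z, hz, hzle⟩ := directedOn_finset_le hSne hSdir (F.image g) (by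
    intro y hy
    obtain ⟨b, hb, rfl⟩ := Finset.mem_image.mp (by simpa using hy)
    exact (hg b hb).1)
  refine ⟨z, hSB hz, hSwb z hz, fun b hb => ?_⟩
  exact wb_mono le_rfl (hg b hb).2 (hzle (g b) (Finset.mem_image_of_mem g hb))

theorem stmt16 {D : Type*} [PartialOrder D] [DecidableEq D] (B : Set D)
    (hdcpo : IsDcpo D) (hbasis : IsBasis B) (x : D) :
    IsState (domCon B) (domEnt B) {a : ↥B | WayBelow (a : D) x} ∧
      IsLUB (Subtype.val '' {a : ↥B | WayBelow (a : D) x}) x := by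
    classical
  set st : Set ↥B := {a : ↥B | WayBelow (a : D) x} with hst
  constructor
  · refine ⟨?_, ?_, ?_⟩
    · -- FinConsistent
      intro F hF
      obtain ⟨d, hdB, hdwb, hd⟩ := interp_finset hbasis x (F.image Subtype.val) (by
        intro b hb
        obtain ⟨a, ha, rfl⟩ := Finset.mem_image.mp hb
        exact hF ha)
      refine ⟨⟨d, hdB⟩, hdwb, Or.inr ?_⟩
      intro b hb
      exact hd (↑b) (Finset.mem_image_of_mem _ hb)
    · -- EntClosed
      intro i hi X hX _ a ⟨b, hb, hab⟩
      rcases Finset.mem_insert.mp hb with rfl | hbX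
      · exact wb_mono (wb_le hab) hi le_rfl
      · exact wb_mono (wb_le hab) (hX hbX) le_rfl
    · -- EntComplete
      intro a ha
      obtain ⟨d, hdB, hdwb, hd⟩ := interp_finset hbasis x {(a : D)}
        (by have ha' : WayBelow (a : D) x := ha; simpa using ha')
      refine ⟨⟨d, hdB⟩, hdwb, ∅, by simp, Or.inr (by simp), ?_⟩
      exact ⟨⟨d, hdB⟩, by simp, hd (↑a) (by simp)⟩
  · constructor
    · rintro y ⟨a, ha, rfl⟩
      exact wb_le ha
    · intro u hu
      obtain ⟨S, hSB, hSwb, hSne, hSdir, hSlub⟩ := hbasis x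
      apply hSlub.2
      intro d hd
      exact hu ⟨⟨d, hSB hd⟩, hSwb d hd, rfl⟩
end
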